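/- arXiv:1407.2464 — 2 statements merged into one kernel-verified Lean document; each statement's English description precedes it below -/
import Mathlib

section
/- Let 𝓑 be a connected building set on a finite ground set S that is closed under intersection. Then every generating subset 𝓒 of 𝓑 contains the set Π(𝓑) of all 𝓑-paths. In particular, Π(𝓑) is the unique inclusion-minimal generating subset of 𝓑. -/
/-- `𝓑` is a building set on the finite ground set `V`: a collection of
nonempty subsets of `V` such that (B1) the union of two intersecting elements
is again an element, and (B2) all singletons are elements. -/
def IsBuilding {V : Type*} [DecidableEq V] (𝓑 : Set (Finset V)) : Prop :=
  (∀ B ∈ 𝓑, B.Nonempty) ∧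
  (∀ B ∈ 𝓑, ∀ B' ∈ 𝓑, (B ∩ B').Nonempty → B ∪ B' ∈ 𝓑) ∧
  (∀ s : V, ({s} : Finset V) ∈ 𝓑)

/-- `P` is the `𝓑`-path `π(s,t)`: the inclusion-smallest element of `𝓑`
containing both `s` and `t`. -/
def IsMinPath {V : Type*} (𝓑 : Set (Finset V)) (s t : V) (P : Finset V) : Prop :=
  P ∈ 𝓑 ∧ s ∈ P ∧ t ∈ P ∧ ∀ B ∈ 𝓑, s ∈ B → t ∈ B → P ⊆ B

/-- `P` is a `𝓑`-path, i.e. an element of `Π(𝓑)`. -/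
def IsBPath {V : Type*} (𝓑 : Set (Finset V)) (P : Finset V) : Prop :=
  ∃ s t : V, IsMinPath 𝓑 s t P

/-- `𝓒` is a generating subset of `𝓑`: for every `B ∈ 𝓑` and `b ∈ B`, the set
`B` is the union of the elements `C ∈ 𝓒` with `b ∈ C ⊆ B`. -/
def IsGenerating {V : Type*} (𝓑 𝓒 : Set (Finset V)) : Prop :=
  𝓒 ⊆ 𝓑 ∧ ∀ B ∈ 𝓑, ∀ b ∈ B,
    (B : Set V) = ⋃ C ∈ {C : Finset V | C ∈ 𝓒 ∧ b ∈ C ∧ C ⊆ B}, (C : Set V)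

theorem IsGenerating.setOf_isBPath_subset {V : Type*} {𝓑 𝓒 : Set (Finset V)}
    (h𝓒 : IsGenerating 𝓑 𝓒) : {P : Finset V | IsBPath 𝓑 P} ⊆ 𝓒 := by
  rintro P ⟨s, t, hP𝓑, hsP, htP, hPmin⟩
  -- Generating `P` at `s` gives `C ∈ 𝓒` with `s, t ∈ C ⊆ P`; minimality of `P` forces `C = P`.
  have htP' : t ∈ (P : Set V) := htP
  rw [h𝓒.2 P hP𝓑 s hsP] at htP'
  simp only [Set.mem_iUnion, Set.mem_ofPred_eq, exists_prop] at htP'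
  obtain ⟨C, ⟨hC𝓒, hsC, hCP⟩, htC⟩ := htP'
  have hCeq : C = P := hCP.antisymm (hPmin C (h𝓒.1 hC𝓒) hsC htC)
  exact hCeq ▸ hC𝓒

theorem exists_isMinPath {V : Type*} [Fintype V] [DecidableEq V] {𝓑 : Set (Finset V)}
    (hconn : (Finset.univ : Finset V) ∈ 𝓑)
    (hclosed : ∀ B ∈ 𝓑, ∀ B' ∈ 𝓑, (B ∩ B').Nonempty → B ∩ B' ∈ 𝓑) (s t : V) :
    ∃ P, IsMinPath 𝓑 s t P := by
  obtain ⟨P, hPmin⟩ := (Set.toFinite {B : Finset V | B ∈ 𝓑 ∧ s ∈ B ∧ t ∈ B}).exists_minimal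
    ⟨Finset.univ, hconn, Finset.mem_univ s, Finset.mem_univ t⟩
  obtain ⟨hP𝓑, hsP, htP⟩ := hPmin.prop
  refine ⟨P, hP𝓑, hsP, htP, fun B hB hsB htB => ?_⟩
  have hPB : P ∩ B ∈ 𝓑 := hclosed P hP𝓑 B hB ⟨s, Finset.mem_inter.2 ⟨hsP, hsB⟩⟩
  have hPB_eq : P ∩ B = P := hPmin.eq_of_le ⟨hPB, Finset.mem_inter.2 ⟨hsP, hsB⟩,
    Finset.mem_inter.2 ⟨htP, htB⟩⟩ Finset.inter_subset_left
  exact Finset.inter_eq_left.1 hPB_eq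

theorem isGenerating_setOf_isBPath {V : Type*} [Fintype V] [DecidableEq V]
    {𝓑 : Set (Finset V)} (hconn : (Finset.univ : Finset V) ∈ 𝓑)
    (hclosed : ∀ B ∈ 𝓑, ∀ B' ∈ 𝓑, (B ∩ B').Nonempty → B ∩ B' ∈ 𝓑) :
    IsGenerating 𝓑 {P : Finset V | IsBPath 𝓑 P} := by
  refine ⟨fun P ⟨_, _, hP⟩ => hP.1, fun B hB b hb => ?_⟩
  ext x
  simp only [Set.mem_iUnion, Set.mem_ofPred_eq, Finset.mem_coe, exists_prop]
  constructor
  · intro hx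
    obtain ⟨P, hP⟩ := exists_isMinPath hconn hclosed b x
    exact ⟨P, ⟨⟨b, x, hP⟩, hP.2.1, hP.2.2.2 B hB hb hx⟩, hP.2.2.1⟩
  · rintro ⟨P, ⟨-, -, hPB⟩, hxP⟩
    exact hPB hxP

theorem bPaths_subset_generating_general {V : Type*} [Fintype V] [DecidableEq V]
    (𝓑 : Set (Finset V))
    (hconn : (Finset.univ : Finset V) ∈ 𝓑)
    (hclosed : ∀ B ∈ 𝓑, ∀ B' ∈ 𝓑, (B ∩ B').Nonempty → B ∩ B' ∈ 𝓑) :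
    (∀ 𝓒 : Set (Finset V), IsGenerating 𝓑 𝓒 → {P : Finset V | IsBPath 𝓑 P} ⊆ 𝓒) ∧
    (∀ 𝓒 : Set (Finset V), IsGenerating 𝓑 𝓒 →
      (∀ 𝓒' : Set (Finset V), IsGenerating 𝓑 𝓒' → 𝓒 ⊆ 𝓒') →
      𝓒 = {P : Finset V | IsBPath 𝓑 P}) :=
  ⟨fun _ h𝓒 => h𝓒.setOf_isBPath_subset, fun _ h𝓒 hleast =>
    (hleast _ (isGenerating_setOf_isBPath hconn hclosed)).antisymm h𝓒.setOf_isBPath_subset⟩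

/-- For a connected building set `𝓑` closed under intersection, every
generating subset of `𝓑` contains the set `Π(𝓑)` of all `𝓑`-paths; in
particular, `Π(𝓑)` is the unique inclusion-minimal generating subset of `𝓑`. -/
theorem bPaths_subset_generating {V : Type*} [Fintype V] [DecidableEq V]
    (𝓑 : Set (Finset V)) (hbuild : IsBuilding 𝓑)
    (hconn : (Finset.univ : Finset V) ∈ 𝓑)
    (hclosed : ∀ B ∈ 𝓑, ∀ B' ∈ 𝓑, (B ∩ B').Nonempty → B ∩ B' ∈ 𝓑) :
    (∀ 𝓒 : Set (Finset V), IsGenerating 𝓑 𝓒 → {P : Finset V | IsBPath 𝓑 P} ⊆ 𝓒) ∧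
    (∀ 𝓒 : Set (Finset V), IsGenerating 𝓑 𝓒 →
      (∀ 𝓒' : Set (Finset V), IsGenerating 𝓑 𝓒' → 𝓒 ⊆ 𝓒') →
      𝓒 = {P : Finset V | IsBPath 𝓑 P}) :=
  bPaths_subset_generating_general 𝓑 hconn hclosed
end

section
/- Let 𝓑 be a connected building set on a finite ground set S, let 𝓝 be a 𝓑-nested set, set 𝓝⁺ = 𝓝 ∪ {S}, and for N ∈ 𝓝⁺ define X_N = N \ ⋃{N' ∈ 𝓝⁺ : N' ⊊ N}. Then for every C ∈ 𝓑 there is a unique element N(C) ∈ 𝓝⁺ such that C ∩ X_{N(C)} ≠ ∅ and N ⊆ N(C) for every N ∈ 𝓝⁺ with C ∩ X_N ≠ ∅; moreover, N(C) is the inclusion-minimal element of 𝓝⁺ containing C. -/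
/-- `𝓝` is a `𝓑`-nested set: a subset of `𝓑 \ {ground set}` such that
(N1) any two elements are nested or disjoint, and (N2) the union of any `k ≥ 2`
pairwise disjoint elements is not in `𝓑`. -/
def IsNested {V : Type*} [Fintype V] [DecidableEq V]
    (𝓑 𝓝 : Set (Finset V)) : Prop :=
  𝓝 ⊆ 𝓑 \ {Finset.univ} ∧
  (∀ N ∈ 𝓝, ∀ N' ∈ 𝓝, N ⊆ N' ∨ N' ⊆ N ∨ N ∩ N' = ∅) ∧
  (∀ F : Finset (Finset V), ↑F ⊆ 𝓝 → 2 ≤ F.card →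
    (∀ N ∈ F, ∀ N' ∈ F, N ≠ N' → N ∩ N' = ∅) → F.biUnion id ∉ 𝓑)

/-- The label set `X_N = N \ ⋃ {N' ∈ 𝓝⁺ : N' ⊊ N}` of an element `N` of the
augmented nested set `𝓝⁺`. -/
def nestedLabel {V : Type*} (𝓝p : Set (Finset V)) (N : Finset V) : Set V :=
  (N : Set V) \ ⋃ N' ∈ {N' : Finset V | N' ∈ 𝓝p ∧ N' ⊂ N}, (N' : Set V)

open Finset

section

lemma mem_nestedLabel {V : Type*} {𝓛 : Set (Finset V)} {N : Finset V} {x : V} :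
    x ∈ nestedLabel 𝓛 N ↔ x ∈ N ∧ ∀ N' ∈ 𝓛, N' ⊂ N → x ∉ N' := by
  simp [nestedLabel]

variable {V : Type*} [DecidableEq V]

def IsLaminar (𝓛 : Set (Finset V)) : Prop :=
  ∀ N ∈ 𝓛, ∀ N' ∈ 𝓛, (N ∩ N').Nonempty → N ⊆ N' ∨ N' ⊆ N

namespace IsLaminar

variable {𝓛 : Set (Finset V)}

lemma subset_of_mem_nestedLabel (h𝓛 : IsLaminar 𝓛) {N M : Finset V} (hN : N ∈ 𝓛)
    (hM : M ∈ 𝓛) {x : V} (hxN : x ∈ nestedLabel 𝓛 N) (hxM : x ∈ M) : N ⊆ M := by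
  rw [mem_nestedLabel] at hxN
  by_contra hNM
  have hMN := (h𝓛 N hN M hM ⟨x, mem_inter.2 ⟨hxN.1, hxM⟩⟩).resolve_left hNM
  exact hxN.2 M hM ⟨hMN, hNM⟩ hxM

lemma exists_isLeast_superset [Fintype V] (h𝓛 : IsLaminar 𝓛) {C : Finset V}
    (hC : C.Nonempty) (hC𝓛 : ∃ N ∈ 𝓛, C ⊆ N) :
    ∃ N₀, IsLeast {N | N ∈ 𝓛 ∧ C ⊆ N} N₀ := by
  obtain ⟨N, hN⟩ := hC𝓛
  obtain ⟨N₀, -, hmin⟩ := Finite.exists_le_minimal (p := fun N ↦ N ∈ 𝓛 ∧ C ⊆ N) hN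
  refine ⟨N₀, hmin.1, fun N' hN' ↦ ?_⟩
  have hmeet : (N₀ ∩ N').Nonempty := hC.mono (subset_inter hmin.1.2 hN'.2)
  exact (h𝓛 N₀ hmin.1.1 N' hN'.1 hmeet).elim id (hmin.2 hN')

lemma exists_pairwise_disjoint_biUnion_eq {D : Finset (Finset V)}
    (hD : IsLaminar (↑D : Set (Finset V))) :
    ∃ F ⊆ D, (∀ M ∈ F, ∀ M' ∈ F, M ≠ M' → M ∩ M' = ∅) ∧ F.biUnion id = D.biUnion id := by
  classical
  refine ⟨D.filter (Maximal (· ∈ D)), filter_subset _ _, ?_, ?_⟩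
  · intro M hM M' hM' hne
    rw [mem_filter] at hM hM'
    by_contra hmeet
    rcases hD M hM.1 M' hM'.1 (nonempty_iff_ne_empty.2 hmeet) with h | h
    · exact hne (le_antisymm h (hM.2.2 hM'.1 h))
    · exact hne (le_antisymm (hM'.2.2 hM.1 h) h)
  · refine Subset.antisymm (biUnion_subset_biUnion_of_subset_left _ (filter_subset _ _)) ?_
    simp only [biUnion_subset, id]
    intro N hN
    obtain ⟨M, hNM, hM⟩ := D.exists_le_maximal hN
    exact hNM.trans (subset_biUnion_of_mem id (mem_filter.2 ⟨hM.1, hM⟩))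

end IsLaminar

lemma IsNested.isLaminar_union_univ [Fintype V] {𝓑 𝓝 : Set (Finset V)}
    (hnested : IsNested 𝓑 𝓝) : IsLaminar (𝓝 ∪ {univ}) := by
  rintro N (hN | rfl) N' (hN' | rfl) hmeet
  · rcases hnested.2.1 N hN N' hN' with h | h | h
    · exact .inl h
    · exact .inr h
    · simp [h] at hmeet
  all_goals simp

lemma IsBuilding.union_biUnion_mem {𝓑 : Set (Finset V)} (hbuild : IsBuilding 𝓑) {C : Finset V}
    (hC : C ∈ 𝓑) {F : Finset (Finset V)} (hF : ∀ B ∈ F, B ∈ 𝓑 ∧ (B ∩ C).Nonempty) :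
    C ∪ F.biUnion id ∈ 𝓑 := by
  induction F using Finset.induction_on with
  | empty => simpa using hC
  | @insert B F _ ih =>
    obtain ⟨hB, x, hx⟩ := hF B (mem_insert_self B F)
    rw [mem_inter] at hx
    have hmeet : ((C ∪ F.biUnion id) ∩ B).Nonempty :=
      ⟨x, mem_inter.2 ⟨mem_union_left _ hx.2, hx.1⟩⟩
    have hunion := hbuild.2.1 _ (ih fun B' hB' ↦ hF B' (mem_insert_of_mem hB')) B hB hmeet
    rwa [biUnion_insert, id, union_comm B, ← union_assoc]

lemma IsNested.exists_subset_of_subset_biUnion [Fintype V] {𝓑 𝓝 : Set (Finset V)}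
    (hbuild : IsBuilding 𝓑) (hnested : IsNested 𝓑 𝓝) {C : Finset V} (hC : C ∈ 𝓑)
    {D : Finset (Finset V)} (hD𝓝 : ↑D ⊆ 𝓝) (hDC : ∀ N ∈ D, (N ∩ C).Nonempty)
    (hCD : C ⊆ D.biUnion id) : ∃ N ∈ D, C ⊆ N := by
  have hDlam : IsLaminar (D : Set (Finset V)) := fun N hN N' hN' ↦
    hnested.isLaminar_union_univ N (.inl (hD𝓝 hN)) N' (.inl (hD𝓝 hN'))
  obtain ⟨F, hFD, hdisj, hFunion⟩ := hDlam.exists_pairwise_disjoint_biUnion_eq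
  rw [← hFunion] at hCD
  have hFB : F.biUnion id ∈ 𝓑 := by
    rw [← union_eq_right.2 hCD]
    exact hbuild.union_biUnion_mem hC fun B hB ↦
      ⟨(hnested.1 (hD𝓝 (hFD hB))).1, hDC B (hFD hB)⟩
  have hFcard : F.card < 2 := not_le.1 fun hcard ↦
    hnested.2.2 F (fun _ hB ↦ hD𝓝 (hFD hB)) hcard hdisj hFB
  obtain ⟨M, rfl⟩ : ∃ M, F = {M} := by
    obtain ⟨x, hx⟩ := hbuild.1 C hC
    obtain ⟨M, hM, -⟩ := mem_biUnion.1 (hCD hx)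
    exact card_eq_one.1 (le_antisymm (Nat.lt_succ_iff.1 hFcard) (card_pos.2 ⟨M, hM⟩))
  exact ⟨M, hFD (mem_singleton_self M), by simpa using hCD⟩

lemma IsNested.inter_nestedLabel_nonempty [Fintype V] {𝓑 𝓝 : Set (Finset V)}
    (hbuild : IsBuilding 𝓑) (hnested : IsNested 𝓑 𝓝) {C N₀ : Finset V} (hC : C ∈ 𝓑)
    (hN₀ : IsLeast {N | N ∈ 𝓝 ∪ {univ} ∧ C ⊆ N} N₀) :
    ((C : Set V) ∩ nestedLabel (𝓝 ∪ {univ}) N₀).Nonempty := by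
  by_contra hempty
  classical
  let D := univ.filter fun N ↦ N ∈ 𝓝 ∪ {univ} ∧ N ⊂ N₀ ∧ (N ∩ C).Nonempty
  have hD𝓝 : ↑D ⊆ 𝓝 := by
    rintro N hN
    obtain ⟨hN | rfl, hNN₀, -⟩ := (mem_filter.1 hN).2
    · exact hN
    · exact absurd (subset_univ N₀) hNN₀.2
  have hCD : C ⊆ D.biUnion id := by
    intro x hx
    by_contra hxD
    refine hempty ⟨x, hx, mem_nestedLabel.2 ⟨hN₀.1.2 hx, fun N hN hNN₀ hxN ↦ hxD ?_⟩⟩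
    exact mem_biUnion.2 ⟨N, mem_filter.2 ⟨mem_univ N, hN, hNN₀, x, mem_inter.2 ⟨hxN, hx⟩⟩, hxN⟩
  obtain ⟨N, hND, hCN⟩ := hnested.exists_subset_of_subset_biUnion hbuild hC hD𝓝
    (fun N hN ↦ (mem_filter.1 hN).2.2.2) hCD
  obtain ⟨hN, hNN₀, -⟩ := (mem_filter.1 hND).2
  exact hNN₀.2 (hN₀.2 ⟨hN, hCN⟩)

end

theorem exists_unique_nestedSupport_general {V : Type*} [Fintype V] [DecidableEq V]
    (𝓑 𝓝 : Set (Finset V)) (hbuild : IsBuilding 𝓑)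
    (hnested : IsNested 𝓑 𝓝) :
    ∀ C ∈ 𝓑, ∃! N₀ : Finset V, N₀ ∈ 𝓝 ∪ {Finset.univ} ∧
      ((C : Set V) ∩ nestedLabel (𝓝 ∪ {Finset.univ}) N₀).Nonempty ∧
      (∀ N ∈ 𝓝 ∪ {Finset.univ},
        ((C : Set V) ∩ nestedLabel (𝓝 ∪ {Finset.univ}) N).Nonempty → N ⊆ N₀) ∧
      C ⊆ N₀ ∧
      (∀ N ∈ 𝓝 ∪ {Finset.univ}, C ⊆ N → N₀ ⊆ N) := by
  intro C hC
  have hlam := hnested.isLaminar_union_univ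
  obtain ⟨N₀, hN₀⟩ := hlam.exists_isLeast_superset (hbuild.1 C hC) ⟨univ, by simp, subset_univ C⟩
  refine ⟨N₀, ⟨hN₀.1.1, hnested.inter_nestedLabel_nonempty hbuild hC hN₀, ?_, hN₀.1.2,
    fun N hN hCN ↦ hN₀.2 ⟨hN, hCN⟩⟩, ?_⟩
  · rintro N hN ⟨x, hxC, hxN⟩
    exact hlam.subset_of_mem_nestedLabel hN hN₀.1.1 hxN (hN₀.1.2 hxC)
  · rintro N₁ ⟨hN₁, -, -, hCN₁, hleast⟩
    exact (hN₀.unique ⟨⟨hN₁, hCN₁⟩, fun N hN ↦ hleast N hN.1 hN.2⟩).symm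

/-- For a connected building set `𝓑`, a `𝓑`-nested set `𝓝` with
`𝓝⁺ = 𝓝 ∪ {S}` and labels `X_N = N \ ⋃ {N' ∈ 𝓝⁺ : N' ⊊ N}`, every `C ∈ 𝓑`
admits a unique `N(C) ∈ 𝓝⁺` such that `C ∩ X_{N(C)} ≠ ∅` and `N ⊆ N(C)` for
every `N ∈ 𝓝⁺` with `C ∩ X_N ≠ ∅`; moreover `N(C)` is the inclusion-minimal
element of `𝓝⁺` containing `C`. -/
theorem exists_unique_nestedSupport {V : Type*} [Fintype V] [DecidableEq V]
    (𝓑 𝓝 : Set (Finset V)) (hbuild : IsBuilding 𝓑)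
    (hconn : (Finset.univ : Finset V) ∈ 𝓑)
    (hnested : IsNested 𝓑 𝓝) :
    ∀ C ∈ 𝓑, ∃! N₀ : Finset V, N₀ ∈ 𝓝 ∪ {Finset.univ} ∧
      ((C : Set V) ∩ nestedLabel (𝓝 ∪ {Finset.univ}) N₀).Nonempty ∧
      (∀ N ∈ 𝓝 ∪ {Finset.univ},
        ((C : Set V) ∩ nestedLabel (𝓝 ∪ {Finset.univ}) N).Nonempty → N ⊆ N₀) ∧
      C ⊆ N₀ ∧
      (∀ N ∈ 𝓝 ∪ {Finset.univ}, C ⊆ N → N₀ ⊆ N) :=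
  exists_unique_nestedSupport_general 𝓑 𝓝 hbuild hnested
end
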